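/- arXiv:1106.4454 — 2 statements merged into one kernel-verified Lean document; each statement's English description precedes it below -/
import Mathlib

section
/- Let T be a tournament on a finite vertex set, let A' be a DESC-set of T, and let T' = T − A'. Let X be the vertex set of a strong component of T'. Then for every vertex x ∈ X, the out-degree of x in the induced subgraph T[X] satisfies (|X| − 1 − d*(x, X))/2 ≤ d⁺_{T[X]}(x) ≤ (|X| − 1 + d*(x, X))/2, where d*(x, X) is the number of arcs of A' joining x to a vertex of X (in either direction). -/
/-!
Digraphs on a finite vertex type `V` are modelled by their arc sets
`D : Finset (V × V)`, where `(x, y) ∈ D` means there is an arc from `x` to `y`.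
-/

namespace DescPaper

variable {V : Type*} [Fintype V] [DecidableEq V]

/-- The out-degree of `x` in the digraph `D`. -/
def outDeg (D : Finset (V × V)) (x : V) : ℕ :=
  (D.filter (fun a => a.1 = x)).card

/-- The in-degree of `x` in the digraph `D`. -/
def inDeg (D : Finset (V × V)) (x : V) : ℕ :=
  (D.filter (fun a => a.2 = x)).card

/-- The number of arcs of `D` from `x` to a vertex of `Y`. -/
def outDegInto (D : Finset (V × V)) (x : V) (Y : Finset V) : ℕ :=
  (D.filter (fun a => a.1 = x ∧ a.2 ∈ Y)).card

/-- The subgraph of `D` induced by the vertex set `X`. -/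
def induce (D : Finset (V × V)) (X : Finset V) : Finset (V × V) :=
  D.filter (fun a => a.1 ∈ X ∧ a.2 ∈ X)

/-- Reachability by a directed path in the digraph `D`. -/
def Reach (D : Finset (V × V)) : V → V → Prop :=
  Relation.ReflTransGen (fun u v => (u, v) ∈ D)

/-- The subgraph of `D` induced by `X` is strongly connected. -/
def StronglyConnectedOn (D : Finset (V × V)) (X : Finset V) : Prop :=
  ∀ x ∈ X, ∀ y ∈ X, Reach (induce D X) x y

/-- `X` is the vertex set of a strong component of `D`:
a maximal (nonempty) vertex set inducing a strongly connected subgraph. -/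
def IsStrongComponent (D : Finset (V × V)) (X : Finset V) : Prop :=
  X.Nonempty ∧ StronglyConnectedOn D X ∧
    ∀ Y : Finset V, X ⊆ Y → StronglyConnectedOn D Y → Y = X

/-- The digraph `D` is balanced: every vertex has equal in- and out-degree. -/
def IsBalanced (D : Finset (V × V)) : Prop :=
  ∀ x : V, outDeg D x = inDeg D x

/-- The subgraph of `D` induced by `X` is Eulerian:
strongly connected and balanced. -/
def EulerianOn (D : Finset (V × V)) (X : Finset V) : Prop :=
  StronglyConnectedOn D X ∧ IsBalanced (induce D X)

/-- `A'` is a DESC-set of `D`: a set of arcs of `D` such that every strong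
component of `D - A'` is Eulerian. -/
def IsDESC (D A' : Finset (V × V)) : Prop :=
  A' ⊆ D ∧ ∀ X : Finset V, IsStrongComponent (D \ A') X → EulerianOn (D \ A') X

/-- `desc D` is the minimum size of a DESC-set of `D`. -/
noncomputable def desc (D : Finset (V × V)) : ℕ :=
  sInf {n | ∃ A' : Finset (V × V), IsDESC D A' ∧ A'.card = n}

/-- `T` is a tournament: no loops, and for every pair of distinct vertices
exactly one of the two possible arcs is present. -/
def IsTournament (T : Finset (V × V)) : Prop :=
  (∀ x : V, (x, x) ∉ T) ∧ ∀ x y : V, x ≠ y → ((x, y) ∈ T ↔ (y, x) ∉ T)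

/-- `dstar A' X Y` is the number of arcs of `A'` with one endpoint in `X`
and the other endpoint in `Y` (in either direction). -/
def dstar (A' : Finset (V × V)) (X Y : Finset V) : ℕ :=
  (A'.filter (fun a => (a.1 ∈ X ∧ a.2 ∈ Y) ∨ (a.1 ∈ Y ∧ a.2 ∈ X))).card

end DescPaper

open DescPaper

/-!
Write `d⁺, d⁻` for the out- and in-degree of `x` in `T[X]` and `a⁺, a⁻` for those in `A'[X]`.
Since `(T - A')[X]` is balanced, `d⁺ - d⁻ = a⁺ - a⁻`; since `T` is a tournament,
`d⁺ + d⁻ = |X| - 1`; and `d*(x, X) = a⁺ + a⁻` because `A' ⊆ T` has no loops.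
Hence `2 d⁺ = |X| - 1 + (a⁺ - a⁻)` with `|a⁺ - a⁻| ≤ d*(x, X)`.
-/

namespace DescPaper

open Finset

variable {V : Type*} [DecidableEq V]

lemma outDeg_sdiff_add_outDeg {D A : Finset (V × V)} (hA : A ⊆ D) (x : V) :
    outDeg (D \ A) x + outDeg A x = outDeg D x := by
  unfold outDeg
  rw [← card_sdiff_add_card_eq_card (filter_subset_filter _ hA)]
  congr 2
  grind

lemma inDeg_sdiff_add_inDeg {D A : Finset (V × V)} (hA : A ⊆ D) (x : V) :
    inDeg (D \ A) x + inDeg A x = inDeg D x := by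
  unfold inDeg
  rw [← card_sdiff_add_card_eq_card (filter_subset_filter _ hA)]
  congr 2
  grind

lemma induce_sdiff (D A : Finset (V × V)) (X : Finset V) :
    induce (D \ A) X = induce D X \ induce A X := by
  unfold induce
  grind

lemma induce_mono {D A : Finset (V × V)} (hA : A ⊆ D) (X : Finset V) :
    induce A X ⊆ induce D X :=
  filter_subset_filter _ hA

lemma outDeg_add_inDeg_eq_of_balanced_sdiff {D A : Finset (V × V)} (hA : A ⊆ D) {x : V}
    (hbal : outDeg (D \ A) x = inDeg (D \ A) x) :
    outDeg D x + inDeg A x = inDeg D x + outDeg A x := by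
  rw [← outDeg_sdiff_add_outDeg hA, ← inDeg_sdiff_add_inDeg hA]
  omega

lemma outDeg_induce_eq_card_filter (D : Finset (V × V)) {X : Finset V} {x : V} (hx : x ∈ X) :
    outDeg (induce D X) x = #{y ∈ X | (x, y) ∈ D} := by
  refine card_nbij' Prod.snd (fun y => (x, y)) ?_ ?_ ?_ ?_ <;>
    intro a <;> grind [induce]

lemma inDeg_induce_eq_card_filter (D : Finset (V × V)) {X : Finset V} {x : V} (hx : x ∈ X) :
    inDeg (induce D X) x = #{y ∈ X | (y, x) ∈ D} := by
  refine card_nbij' Prod.fst (fun y => (y, x)) ?_ ?_ ?_ ?_ <;>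
    intro a <;> grind [induce]

lemma IsTournament.outDeg_add_inDeg_induce {T : Finset (V × V)} (hT : IsTournament T)
    {X : Finset V} {x : V} (hx : x ∈ X) :
    outDeg (induce T X) x + inDeg (induce T X) x + 1 = #X := by
  have hsplit : {y ∈ X | (x, y) ∈ T} ∪ {y ∈ X | (y, x) ∈ T} = X.erase x := by
    ext y
    grind [hT.1 x, hT.2 x y]
  have hdisj : Disjoint {y ∈ X | (x, y) ∈ T} {y ∈ X | (y, x) ∈ T} := by
    refine disjoint_filter.2 fun y _ hxy hyx => ?_
    obtain rfl | hne := eq_or_ne x y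
    · exact hT.1 x hxy
    · exact (hT.2 x y hne).1 hxy hyx
  rw [outDeg_induce_eq_card_filter T hx, inDeg_induce_eq_card_filter T hx,
    ← card_union_of_disjoint hdisj, hsplit, card_erase_add_one hx]

lemma dstar_singleton_eq_outDeg_add_inDeg {A : Finset (V × V)} {X : Finset V} {x : V}
    (hx : x ∈ X) (hloop : (x, x) ∉ A) :
    dstar A {x} X = outDeg (induce A X) x + inDeg (induce A X) x := by
  unfold dstar outDeg inDeg induce
  rw [filter_or, card_union_of_disjoint, filter_filter, filter_filter]
  · congr 2 <;> grind
  · refine disjoint_filter.2 fun a _ hout hin => hloop ?_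
    grind

end DescPaper

open DescPaper

theorem stmt4_general {V : Type*} [DecidableEq V]
    (T A' : Finset (V × V))
    (hT : IsTournament T) (hDESC : IsDESC T A')
    (X : Finset V) (hX : IsStrongComponent (T \ A') X) :
    ∀ x ∈ X,
      ((X.card : ℚ) - 1 - dstar A' {x} X) / 2 ≤ (outDeg (induce T X) x : ℚ) ∧
      (outDeg (induce T X) x : ℚ) ≤ ((X.card : ℚ) - 1 + dstar A' {x} X) / 2 := by
  intro x hx
  obtain ⟨hA'T, hEulerian⟩ := hDESC
  have hbal := (hEulerian X hX).2 x
  rw [induce_sdiff] at hbal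
  have hexcess := outDeg_add_inDeg_eq_of_balanced_sdiff (induce_mono hA'T X) hbal
  qify at hexcess
  rw [← hT.outDeg_add_inDeg_induce hx,
    dstar_singleton_eq_outDeg_add_inDeg hx fun h => hT.1 x (hA'T h)]
  push_cast
  have := (outDeg (induce A' X) x).cast_nonneg (α := ℚ)
  have := (inDeg (induce A' X) x).cast_nonneg (α := ℚ)
  constructor <;> linarith

theorem stmt4 {V : Type*} [Fintype V] [DecidableEq V]
    (T A' : Finset (V × V))
    (hT : IsTournament T) (hDESC : IsDESC T A')
    (X : Finset V) (hX : IsStrongComponent (T \ A') X) :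
    ∀ x ∈ X,
      ((X.card : ℚ) - 1 - dstar A' {x} X) / 2 ≤ (outDeg (induce T X) x : ℚ) ∧
      (outDeg (induce T X) x : ℚ) ≤ ((X.card : ℚ) - 1 + dstar A' {x} X) / 2 :=
  stmt4_general T A' hT hDESC X hX
end

section
/- Let T be a tournament on a finite vertex set, let A' be a DESC-set of T, and let T' = T − A'. Let U be the vertex set of a strong component of T'. Then for any two vertices x, y ∈ U, the out-degrees inside the induced tournament T[U] satisfy |d⁺_{T[U]}(x) − d⁺_{T[U]}(y)| ≤ (d*(x, U) + d*(y, U))/2, where d*(v, U) is the number of arcs of A' joining v to a vertex of U (in either direction). -/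
/-!
Inside a strong component `U` of `T' = T - A'` the digraph `T'[U]` is balanced, so every vertex
`x ∈ U` has in- and out-degree in `T[U]` equal to its `T'[U]`-degrees plus the numbers
`a⁻(x)`, `a⁺(x)` of arcs of `A'` entering and leaving `x` within `U`. As `T[U]` is a tournament,
`d⁺ + d⁻ = |U| - 1`, whence `2 d⁺_{T[U]}(x) = |U| - 1 + a⁺(x) - a⁻(x)`. Subtracting this identity
for `y` from the one for `x` and using `|a⁺(v) - a⁻(v)| ≤ a⁺(v) + a⁻(v) = d*(v, U)` gives the bound.
-/

namespace DescPaper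

variable {V : Type*} [DecidableEq V]

def inDegFrom (D : Finset (V × V)) (x : V) (Y : Finset V) : ℕ :=
  (D.filter (fun a => a.2 = x ∧ a.1 ∈ Y)).card

lemma outDegInto_eq_card_filter (D : Finset (V × V)) (x : V) (Y : Finset V) :
    outDegInto D x Y = (Y.filter (fun y => (x, y) ∈ D)).card := by
  rw [outDegInto, ← Finset.card_image_of_injective (Y.filter fun y => (x, y) ∈ D)
    (Prod.mk_right_injective x)]
  congr 1
  ext ⟨a, b⟩
  simp only [Finset.mem_filter, Finset.mem_image, Prod.mk.injEq]
  constructor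
  · rintro ⟨hab, rfl, hb⟩
    exact ⟨b, ⟨hb, hab⟩, rfl, rfl⟩
  · rintro ⟨c, ⟨hc, hxc⟩, rfl, rfl⟩
    exact ⟨hxc, rfl, hc⟩

lemma inDegFrom_eq_card_filter (D : Finset (V × V)) (x : V) (Y : Finset V) :
    inDegFrom D x Y = (Y.filter (fun y => (y, x) ∈ D)).card := by
  rw [inDegFrom, ← Finset.card_image_of_injective (Y.filter fun y => (y, x) ∈ D)
    (Prod.mk_left_injective x)]
  congr 1
  ext ⟨a, b⟩
  simp only [Finset.mem_filter, Finset.mem_image, Prod.mk.injEq]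
  constructor
  · rintro ⟨hab, rfl, ha⟩
    exact ⟨a, ⟨ha, hab⟩, rfl, rfl⟩
  · rintro ⟨c, ⟨hc, hcx⟩, rfl, rfl⟩
    exact ⟨hcx, rfl, hc⟩

lemma outDeg_induce {D : Finset (V × V)} {X : Finset V} {x : V} (hx : x ∈ X) :
    outDeg (induce D X) x = outDegInto D x X := by
  unfold outDeg outDegInto induce
  rw [Finset.filter_filter]
  congr 1
  ext a
  simp only [Finset.mem_filter]
  constructor
  · rintro ⟨ha, ⟨-, h2⟩, h1⟩
    exact ⟨ha, h1, h2⟩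
  · rintro ⟨ha, rfl, h2⟩
    exact ⟨ha, ⟨hx, h2⟩, rfl⟩

lemma inDeg_induce {D : Finset (V × V)} {X : Finset V} {x : V} (hx : x ∈ X) :
    inDeg (induce D X) x = inDegFrom D x X := by
  unfold inDeg inDegFrom induce
  rw [Finset.filter_filter]
  congr 1
  ext a
  simp only [Finset.mem_filter]
  constructor
  · rintro ⟨ha, ⟨h1, -⟩, h2⟩
    exact ⟨ha, h2, h1⟩
  · rintro ⟨ha, rfl, h1⟩
    exact ⟨ha, ⟨h1, hx⟩, rfl⟩

lemma card_filter_sdiff_add {D A' : Finset (V × V)} (hA : A' ⊆ D)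
    (p : V × V → Prop) [DecidablePred p] :
    ((D \ A').filter p).card + (A'.filter p).card = (D.filter p).card := by
  rw [← Finset.card_union_of_disjoint (Finset.disjoint_filter_filter Finset.sdiff_disjoint),
    ← Finset.filter_union, Finset.sdiff_union_of_subset hA]

lemma outDegInto_sdiff_add {D A' : Finset (V × V)} (hA : A' ⊆ D) (x : V) (Y : Finset V) :
    outDegInto (D \ A') x Y + outDegInto A' x Y = outDegInto D x Y :=
  card_filter_sdiff_add hA _

lemma inDegFrom_sdiff_add {D A' : Finset (V × V)} (hA : A' ⊆ D) (x : V) (Y : Finset V) :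
    inDegFrom (D \ A') x Y + inDegFrom A' x Y = inDegFrom D x Y :=
  card_filter_sdiff_add hA _

lemma IsTournament.outDegInto_add_inDegFrom {T : Finset (V × V)} (hT : IsTournament T)
    {X : Finset V} {x : V} (hx : x ∈ X) :
    outDegInto T x X + inDegFrom T x X = X.card - 1 := by
  rw [outDegInto_eq_card_filter, inDegFrom_eq_card_filter, ← Finset.card_erase_of_mem hx]
  have hloop : (x, x) ∉ T := hT.1 x
  have hout : X.filter (fun y => (x, y) ∈ T) = (X.erase x).filter (fun y => (x, y) ∈ T) := by
    rw [Finset.filter_erase, Finset.erase_eq_of_notMem (by simp [hloop])]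
  have hin : X.filter (fun y => (y, x) ∈ T) = (X.erase x).filter (fun y => (x, y) ∉ T) := by
    ext y
    simp only [Finset.mem_filter, Finset.mem_erase]
    constructor
    · rintro ⟨hy, hyx⟩
      have hne : y ≠ x := by rintro rfl; exact hloop hyx
      exact ⟨⟨hne, hy⟩, (hT.2 y x hne).mp hyx⟩
    · rintro ⟨⟨hne, hy⟩, hxy⟩
      exact ⟨hy, (hT.2 y x hne).mpr hxy⟩
  rw [hout, hin, Finset.card_filter_add_card_filter_not]

lemma dstar_singleton_left {A' : Finset (V × V)} {x : V} (hloop : (x, x) ∉ A')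
    (Y : Finset V) :
    dstar A' {x} Y = outDegInto A' x Y + inDegFrom A' x Y := by
  unfold dstar outDegInto inDegFrom
  rw [← Finset.card_union_of_disjoint, ← Finset.filter_or]
  · congr 1
    ext a
    simp only [Finset.mem_filter, Finset.mem_singleton]
    tauto
  · rw [Finset.disjoint_filter]
    rintro a hab ⟨h1, -⟩ ⟨h2, -⟩
    exact hloop ((Prod.ext h1 h2 : a = (x, x)) ▸ hab)

lemma IsTournament.two_mul_outDeg_induce_add {T A' : Finset (V × V)} (hT : IsTournament T)
    (hA : A' ⊆ T) {U : Finset V} (hbal : IsBalanced (induce (T \ A') U)) {x : V} (hx : x ∈ U) :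
    2 * outDeg (induce T U) x + inDegFrom A' x U = U.card - 1 + outDegInto A' x U := by
  have hsum := hT.outDegInto_add_inDegFrom hx
  have hx' := hbal x
  rw [outDeg_induce hx, inDeg_induce hx] at hx'
  rw [outDeg_induce hx, ← hsum, ← outDegInto_sdiff_add hA, ← inDegFrom_sdiff_add hA, hx']
  ring

end DescPaper

open DescPaper

theorem stmt5_general {V : Type*} [DecidableEq V]
    (T A' : Finset (V × V))
    (hT : IsTournament T) (hDESC : IsDESC T A')
    (U : Finset V) (hU : IsStrongComponent (T \ A') U) :
    ∀ x ∈ U, ∀ y ∈ U,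
      |(outDeg (induce T U) x : ℚ) - outDeg (induce T U) y|
        ≤ ((dstar A' {x} U : ℚ) + dstar A' {y} U) / 2 := by
  intro x hx y hy
  have hbal := (hDESC.2 U hU).2
  have key : ∀ v ∈ U, 2 * (outDeg (induce T U) v : ℚ) + inDegFrom A' v U
      = (U.card - 1 : ℕ) + outDegInto A' v U := fun v hv => by
    exact_mod_cast hT.two_mul_outDeg_induce_add hDESC.1 hbal hv
  have hdstar : ∀ v, (dstar A' {v} U : ℚ) = outDegInto A' v U + inDegFrom A' v U := fun v => by
    exact_mod_cast dstar_singleton_left (fun h => hT.1 v (hDESC.1 h)) U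
  have hx2 := key x hx
  have hy2 := key y hy
  rw [hdstar, hdstar, abs_le]
  constructor <;> linarith [(inDegFrom A' x U).cast_nonneg (α := ℚ),
    (inDegFrom A' y U).cast_nonneg (α := ℚ), (outDegInto A' x U).cast_nonneg (α := ℚ),
    (outDegInto A' y U).cast_nonneg (α := ℚ)]

theorem stmt5 {V : Type*} [Fintype V] [DecidableEq V]
    (T A' : Finset (V × V))
    (hT : IsTournament T) (hDESC : IsDESC T A')
    (U : Finset V) (hU : IsStrongComponent (T \ A') U) :
    ∀ x ∈ U, ∀ y ∈ U,
      |(outDeg (induce T U) x : ℚ) - outDeg (induce T U) y|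
        ≤ ((dstar A' {x} U : ℚ) + dstar A' {y} U) / 2 :=
  stmt5_general T A' hT hDESC U hU
end
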